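/- Let ⟨x_n⟩ be an almost minimal sequence in N and A a C* set in (N,+). Then there exists a sum subsystem ⟨y_n⟩ of ⟨x_n⟩ such that FS(⟨y_n⟩) ∪ FP(⟨y_n⟩) ⊆ A. -/
import Mathlib


attribute [local instance] Ultrafilter.addSemigroup

/-- `FSfrom x m` : finite sums of `x` over nonempty finite index sets contained
in `{m, m+1, ...}`. -/
def FSfrom (x : ℕ → ℕ) (m : ℕ) : Set ℕ :=
  {s | ∃ F : Finset ℕ, F.Nonempty ∧ (∀ n ∈ F, m ≤ n) ∧ s = ∑ n ∈ F, x n}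

/-- `FS x` : all finite sums of the sequence `x`. -/
def FS (x : ℕ → ℕ) : Set ℕ :=
  {s | ∃ F : Finset ℕ, F.Nonempty ∧ s = ∑ n ∈ F, x n}

/-- `FP x` : all finite products of the sequence `x`. -/
def FP (x : ℕ → ℕ) : Set ℕ :=
  {s | ∃ F : Finset ℕ, F.Nonempty ∧ s = ∏ n ∈ F, x n}

/-- `A` is a J-set in `(ℕ, +)`. -/
def IsJSet (A : Set ℕ) : Prop :=
  ∀ F : Finset (ℕ → ℕ), ∃ (a : ℕ) (H : Finset ℕ), H.Nonempty ∧
    ∀ f ∈ F, a + ∑ t ∈ H, f t ∈ A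

/-- `J(ℕ)`: ultrafilters on `ℕ` all of whose members are J-sets. -/
def JN : Set (Ultrafilter ℕ) :=
  {p | ∀ A ∈ p, IsJSet A}

/-- `x` is an almost minimal sequence: `⋂_m cl FS(⟨x_n⟩_{n≥m}) ∩ J(ℕ) ≠ ∅`. -/
def AlmostMinimal (x : ℕ → ℕ) : Prop :=
  ((⋂ m : ℕ, {p : Ultrafilter ℕ | FSfrom x m ∈ p}) ∩ JN).Nonempty

/-- `A` is a C* set in `(ℕ, +)`: a member of every idempotent in `J(ℕ)`. -/
def IsCStarSet (A : Set ℕ) : Prop :=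
  ∀ p : Ultrafilter ℕ, p + p = p → p ∈ JN → A ∈ p

/-- `y` is a sum subsystem of `x`. -/
def IsSumSubsystem (y x : ℕ → ℕ) : Prop :=
  ∃ H : ℕ → Finset ℕ, (∀ n, (H n).Nonempty) ∧
    (∀ n, ∀ i ∈ H n, ∀ j ∈ H (n + 1), i < j) ∧
    ∀ n, y n = ∑ t ∈ H n, x t

lemma mem_uadd {p q : Ultrafilter ℕ} {s : Set ℕ} :
    s ∈ p + q ↔ {a | {b | a + b ∈ s} ∈ q} ∈ p :=
  Ultrafilter.eventually_add p q (· ∈ s)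

lemma IsJSet.mono {A B : Set ℕ} (h : IsJSet A) (hAB : A ⊆ B) : IsJSet B := by
  intro F
  obtain ⟨a, H, hne, hmem⟩ := h F
  exact ⟨a, H, hne, fun f hf => hAB (hmem f hf)⟩

lemma not_isJSet_singleton_zero : ¬ IsJSet ({0} : Set ℕ) := by
  intro h
  obtain ⟨a, H, hne, hmem⟩ := h {fun _ => 1}
  have := hmem (fun _ => 1) (Finset.mem_singleton_self _)
  simp only [Finset.sum_const, smul_eq_mul, mul_one, Set.mem_singleton_iff] at this
  obtain ⟨i, hi⟩ := hne
  have hc : 0 < H.card := Finset.card_pos.mpr ⟨i, hi⟩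
  omega

lemma JN_add {p q : Ultrafilter ℕ} (hp : p ∈ JN) : p + q ∈ JN := by
  intro B hB F
  rw [mem_uadd] at hB
  obtain ⟨a, H, hne, hmem⟩ := hp _ hB F
  have hD : (⋂ f ∈ F, {b : ℕ | (a + ∑ t ∈ H, f t) + b ∈ B}) ∈ (q : Filter ℕ) := by
    rw [Filter.biInter_finset_mem]
    intro f hf
    exact hmem f hf
  rw [Ultrafilter.mem_coe] at hD
  obtain ⟨b, hb⟩ := Ultrafilter.nonempty_of_mem hD
  refine ⟨a + b, H, hne, fun f hf => ?_⟩
  have := Set.mem_iInter₂.mp hb f hf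
  have e : a + b + ∑ t ∈ H, f t = (a + ∑ t ∈ H, f t) + b := by ring
  rw [e]
  exact this

lemma FSfrom_add {x : ℕ → ℕ} {m : ℕ} {p q : Ultrafilter ℕ}
    (hp : FSfrom x m ∈ p) (hq : ∀ k, FSfrom x k ∈ q) : FSfrom x m ∈ p + q := by
  rw [mem_uadd]
  refine Filter.mem_of_superset hp ?_
  rintro a ⟨F, hFne, hFge, rfl⟩
  refine Filter.mem_of_superset (hq (F.sup id + 1)) ?_
  rintro b ⟨G, hGne, hGge, rfl⟩
  have hdisj : Disjoint F G := by
    rw [Finset.disjoint_left]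
    intro i hiF hiG
    have h1 : i ≤ F.sup id := Finset.le_sup (f := id) hiF
    have h2 : F.sup id + 1 ≤ i := hGge i hiG
    omega
  refine ⟨F ∪ G, hFne.mono Finset.subset_union_left, ?_, ?_⟩
  · intro i hi
    rcases Finset.mem_union.mp hi with h | h
    · exact hFge i h
    · obtain ⟨j, hj⟩ := hFne
      have : j ≤ F.sup id := Finset.le_sup (f := id) hj
      have := hFge j hj
      have := hGge i h
      omega
  · rw [Finset.sum_union hdisj]

lemma isClosed_JN : IsClosed JN := by
  have : JN = ⋂ A ∈ {A : Set ℕ | ¬ IsJSet A}, {p : Ultrafilter ℕ | Aᶜ ∈ p} := by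
    ext p
    simp only [Set.mem_iInter, Set.mem_setOf_eq, JN, Ultrafilter.compl_mem_iff_notMem]
    constructor
    · intro h A hA hAp
      exact hA (h A hAp)
    · intro h A hAp
      by_contra hA
      exact h A hA hAp
  rw [this]
  exact isClosed_biInter fun A _ => ultrafilter_isClosed_basic _

theorem exists_q (x : ℕ → ℕ)
    (hx : ((⋂ m : ℕ, {p : Ultrafilter ℕ | FSfrom x m ∈ p}) ∩ JN).Nonempty) :
    ∃ q : Ultrafilter ℕ, q + q = q ∧ q ∈ JN ∧ ∀ m, FSfrom x m ∈ q := by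
  set S : Set (Ultrafilter ℕ) := (⋂ m : ℕ, {p : Ultrafilter ℕ | FSfrom x m ∈ p}) ∩ JN with hS
  have hclosed : IsClosed S :=
    ((isClosed_iInter fun m => ultrafilter_isClosed_basic _).inter isClosed_JN)
  have hadd : ∀ p ∈ S, ∀ q ∈ S, p + q ∈ S := by
    rintro p ⟨hp1, hp2⟩ q ⟨hq1, hq2⟩
    constructor
    · rw [Set.mem_iInter]
      intro m
      exact FSfrom_add (Set.mem_iInter.mp hp1 m) (fun k => Set.mem_iInter.mp hq1 k)
    · exact JN_add hp2
  obtain ⟨q, hqS, hq⟩ := exists_idempotent_in_compact_add_subsemigroup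
    (fun r => Ultrafilter.continuous_add_left r) S hx hclosed.isCompact hadd
  exact ⟨q, hq, hqS.2, fun m => Set.mem_iInter.mp hqS.1 m⟩

lemma IsJSet.nmul_image {C : Set ℕ} (hC : IsJSet C) {n : ℕ} (hn : 0 < n) :
    IsJSet {m | ∃ c ∈ C, m = n * c} := by
  classical
  intro F
  -- residue vector map
  set v : ℕ → (F → Fin n) := fun s f => ⟨(f.1 s) % n, Nat.mod_lt _ hn⟩ with hv
  obtain ⟨r, hr⟩ := Finite.exists_infinite_fiber v
  have hinf : (v ⁻¹' {r}).Infinite := Set.infinite_coe_iff.mp hr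
  set e : ℕ → ℕ := fun k => ((Set.Infinite.natEmbedding _ hinf) k : ℕ) with he
  have he_inj : Function.Injective e := fun a b hab =>
    (Set.Infinite.natEmbedding _ hinf).injective (Subtype.ext hab)
  have he_mem : ∀ k, e k ∈ v ⁻¹' {r} := fun k => ((Set.Infinite.natEmbedding _ hinf) k).2
  -- key: for f ∈ F, f (e k) % n = (r ⟨f, hf⟩ : ℕ)
  have hmod : ∀ (f : ℕ → ℕ) (hf : f ∈ F) (k : ℕ), f (e k) % n = (r ⟨f, hf⟩ : ℕ) := by
    intro f hf k
    have := he_mem k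
    simp only [Set.mem_preimage, Set.mem_singleton_iff] at this
    have := congrFun this ⟨f, hf⟩
    simpa [hv] using congrArg Fin.val this
  -- the divided functions
  set h : (ℕ → ℕ) → ℕ → ℕ := fun f t =>
    (∑ j ∈ Finset.range n, f (e (n * t + j)) / n) +
      (if hf : f ∈ F then (r ⟨f, hf⟩ : ℕ) else 0) with hh
  have hkey : ∀ (f : ℕ → ℕ) (hf : f ∈ F) (t : ℕ),
      ∑ j ∈ Finset.range n, f (e (n * t + j)) = n * h f t := by
    intro f hf t
    have : ∀ j ∈ Finset.range n,
        f (e (n * t + j)) = n * (f (e (n * t + j)) / n) + (r ⟨f, hf⟩ : ℕ) := by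
      intro j _
      rw [← hmod f hf (n * t + j)]
      exact (Nat.div_add_mod _ n).symm
    rw [Finset.sum_congr rfl this, Finset.sum_add_distrib, Finset.sum_const,
      Finset.card_range, ← Finset.mul_sum, hh]
    simp only [dif_pos hf]
    rw [smul_eq_mul]
    ring
  obtain ⟨a, H', hne, hmem⟩ := hC (F.image h)
  refine ⟨n * a, (H' ×ˢ Finset.range n).image (fun p => e (n * p.1 + p.2)), ?_, ?_⟩
  · obtain ⟨t, ht⟩ := hne
    exact ⟨e (n * t + 0), Finset.mem_image.mpr ⟨(t, 0), Finset.mem_product.mpr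
      ⟨ht, Finset.mem_range.mpr hn⟩, rfl⟩⟩
  · intro f hf
    have hinjOn : Set.InjOn (fun p : ℕ × ℕ => e (n * p.1 + p.2))
        (H' ×ˢ Finset.range n : Finset (ℕ × ℕ)) := by
      intro p hp q hq hpq
      have hp2 : p.2 < n := Finset.mem_range.mp (Finset.mem_product.mp hp).2
      have hq2 : q.2 < n := Finset.mem_range.mp (Finset.mem_product.mp hq).2
      have heq : n * p.1 + p.2 = n * q.1 + q.2 := he_inj hpq
      have e1 : (n * p.1 + p.2) / n = p.1 := by
        rw [Nat.mul_add_div hn, Nat.div_eq_of_lt hp2, add_zero]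
      have e2 : (n * q.1 + q.2) / n = q.1 := by
        rw [Nat.mul_add_div hn, Nat.div_eq_of_lt hq2, add_zero]
      have h1 : p.1 = q.1 := by rw [← e1, ← e2, heq]
      rw [h1] at heq
      have h2 : p.2 = q.2 := by omega
      exact Prod.ext h1 h2
    rw [Finset.sum_image hinjOn, Finset.sum_product]
    have : ∀ t ∈ H', ∑ j ∈ Finset.range n, f (e (n * t + j)) = n * h f t :=
      fun t _ => hkey f hf t
    rw [Finset.sum_congr rfl this, ← Finset.mul_sum, ← Nat.mul_add]
    exact ⟨a + ∑ t ∈ H', h f t, hmem (h f) (Finset.mem_image_of_mem h hf), rfl⟩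

lemma umap_add (n : ℕ) (p r : Ultrafilter ℕ) :
    (p + r).map (fun t => n * t) = p.map (fun t => n * t) + r.map (fun t => n * t) := by
  apply Ultrafilter.coe_injective
  apply Filter.ext
  intro s
  simp only [Ultrafilter.mem_coe, Ultrafilter.mem_map, mem_uadd, Set.preimage_setOf_eq,
    Set.mem_preimage, Set.preimage]
  have : ∀ a : ℕ, {b | n * (a + b) ∈ s} = {b | n * a + n * b ∈ s} := by
    intro a; ext b; simp [Nat.mul_add]
  constructor
  · intro hmem
    refine Filter.mem_of_superset hmem ?_
    intro a ha
    simp only [Set.mem_setOf_eq] at ha ⊢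
    rw [← this a]; exact ha
  · intro hmem
    refine Filter.mem_of_superset hmem ?_
    intro a ha
    simp only [Set.mem_setOf_eq] at ha ⊢
    rw [this a]; exact ha

lemma div_mem' {A : Set ℕ} (hA : IsCStarSet A) {q : Ultrafilter ℕ} (hq : q + q = q)
    (hJq : q ∈ JN) {n : ℕ} (hn : 0 < n) : {t : ℕ | n * t ∈ A} ∈ q := by
  set q' := q.map (fun t => n * t) with hq'
  have hidem : q' + q' = q' := by rw [hq', ← umap_add, hq]
  have hJq' : q' ∈ JN := by
    intro B hB
    have hpre : (fun t => n * t) ⁻¹' B ∈ q := Ultrafilter.mem_map.mp hB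
    have hJ : IsJSet ((fun t => n * t) ⁻¹' B) := hJq _ hpre
    refine (hJ.nmul_image hn).mono ?_
    rintro m ⟨c, hc, rfl⟩
    exact hc
  have : A ∈ q' := hA q' hidem hJq'
  exact Ultrafilter.mem_map.mp this

-- star set lemmas
lemma star_mem {A : Set ℕ} {q : Ultrafilter ℕ} (hq : q + q = q) (hAq : A ∈ q) :
    {s | s ∈ A ∧ {t | s + t ∈ A} ∈ q} ∈ q := by
  have h2 : {a | {b | a + b ∈ A} ∈ q} ∈ q := mem_uadd.mp (by rw [hq]; exact hAq)
  have := Filter.inter_mem (Ultrafilter.mem_coe.mpr hAq) (Ultrafilter.mem_coe.mpr h2)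
  rw [Ultrafilter.mem_coe] at this
  refine Filter.mem_of_superset this ?_
  rintro s ⟨h1, h2⟩
  exact ⟨h1, h2⟩

lemma star_step {A : Set ℕ} {q : Ultrafilter ℕ} (hq : q + q = q) {s : ℕ}
    (hs : s ∈ {s | s ∈ A ∧ {t | s + t ∈ A} ∈ q}) :
    {t | s + t ∈ {s | s ∈ A ∧ {t | s + t ∈ A} ∈ q}} ∈ q := by
  obtain ⟨hsA, hB⟩ := hs
  set B : Set ℕ := {t | s + t ∈ A} with hBdef
  have hB' : {a | {b | a + b ∈ B} ∈ q} ∈ q := mem_uadd.mp (by rw [hq]; exact hB)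
  have hint := Filter.inter_mem (Ultrafilter.mem_coe.mpr hB) (Ultrafilter.mem_coe.mpr hB')
  rw [Ultrafilter.mem_coe] at hint
  refine Filter.mem_of_superset hint ?_
  rintro t ⟨ht1, ht2⟩
  refine ⟨ht1, ?_⟩
  simp only [Set.mem_setOf_eq, hBdef] at ht2 ⊢
  refine Filter.mem_of_superset ht2 ?_
  intro u hu
  simp only [Set.mem_setOf_eq] at hu ⊢
  rw [add_assoc]
  exact hu

def GoodFam (x : ℕ → ℕ) (Astar A : Set ℕ) (n : ℕ) (g : ℕ → Finset ℕ) : Prop :=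
  (∀ i < n, (g i).Nonempty) ∧
  (∀ i, i + 1 < n → ∀ a ∈ g i, ∀ b ∈ g (i + 1), a < b) ∧
  (∀ i < n, 1 ≤ ∑ t ∈ g i, x t) ∧
  (∀ G : Finset ℕ, G.Nonempty → (∀ i ∈ G, i < n) →
    (∑ i ∈ G, ∑ t ∈ g i, x t) ∈ Astar ∧ (∏ i ∈ G, ∑ t ∈ g i, x t) ∈ A)

lemma goodFam_zero (x : ℕ → ℕ) (Astar A : Set ℕ) :
    GoodFam x Astar A 0 (fun _ => ∅) := by
  refine ⟨fun i hi => absurd hi (by omega), fun i hi => absurd hi (by omega),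
    fun i hi => absurd hi (by omega), fun G hG hlt => ?_⟩
  obtain ⟨i, hi⟩ := hG
  exact absurd (hlt i hi) (by omega)

lemma exists_ext (x : ℕ → ℕ) (A Astar : Set ℕ) (q : Ultrafilter ℕ)
    (hsub : Astar ⊆ A)
    (hstar_mem : Astar ∈ q)
    (hstar : ∀ s ∈ Astar, {t | s + t ∈ Astar} ∈ q)
    (hdiv : ∀ m : ℕ, 0 < m → {t | m * t ∈ A} ∈ q)
    (hFS : ∀ m, FSfrom x m ∈ q)
    (hne0 : {t : ℕ | t ≠ 0} ∈ q)
    {n : ℕ} {g : ℕ → Finset ℕ} (hg : GoodFam x Astar A n g) :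
    ∃ H, GoodFam x Astar A (n + 1) (Function.update g n H) := by
  classical
  obtain ⟨hg1, hg2, hg3, hg4⟩ := hg
  set m := ((Finset.range n).sup fun i => (g i).sup id) + 1 with hm
  set Big : Set ℕ := ⋂ G ∈ ((Finset.range n).powerset : Finset (Finset ℕ)),
    {t | G.Nonempty → ((∑ i ∈ G, ∑ t' ∈ g i, x t') + t ∈ Astar ∧
      (∏ i ∈ G, ∑ t' ∈ g i, x t') * t ∈ A)} with hBig
  have hBigq : Big ∈ (q : Filter ℕ) := by
    rw [hBig, Filter.biInter_finset_mem]
    intro G hG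
    by_cases hGne : G.Nonempty
    · have hGlt : ∀ i ∈ G, i < n := fun i hi =>
        Finset.mem_range.mp (Finset.mem_powerset.mp hG hi)
      obtain ⟨hsum, hprod⟩ := hg4 G hGne hGlt
      have h1 : {t | (∑ i ∈ G, ∑ t' ∈ g i, x t') + t ∈ Astar} ∈ q := hstar _ hsum
      have hpos : 0 < ∏ i ∈ G, ∑ t' ∈ g i, x t' :=
        Finset.prod_pos fun i hi => hg3 i (hGlt i hi)
      have h2 : {t | (∏ i ∈ G, ∑ t' ∈ g i, x t') * t ∈ A} ∈ q := hdiv _ hpos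
      refine Filter.mem_of_superset
        (Filter.inter_mem (Ultrafilter.mem_coe.mpr h1) (Ultrafilter.mem_coe.mpr h2)) ?_
      rintro t ⟨ht1, ht2⟩ _
      exact ⟨ht1, ht2⟩
    · refine Filter.mem_of_superset Filter.univ_mem ?_
      intro t _ hGne'
      exact absurd hGne' hGne
  have hBq : (Astar ∩ ({t : ℕ | t ≠ 0} ∩ (FSfrom x m ∩ Big))) ∈ (q : Filter ℕ) :=
    Filter.inter_mem (Ultrafilter.mem_coe.mpr hstar_mem)
      (Filter.inter_mem (Ultrafilter.mem_coe.mpr hne0)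
        (Filter.inter_mem (Ultrafilter.mem_coe.mpr (hFS m)) hBigq))
  obtain ⟨t0, ht0star, ht0ne, ht0FS, ht0Big⟩ :
      ∃ t0, t0 ∈ Astar ∧ t0 ≠ 0 ∧ t0 ∈ FSfrom x m ∧ t0 ∈ Big := by
    obtain ⟨t0, h1, h2, h3, h4⟩ := Ultrafilter.nonempty_of_mem (Ultrafilter.mem_coe.mp hBq)
    exact ⟨t0, h1, h2, h3, h4⟩
  obtain ⟨F, hFne, hFge, hFsum⟩ := ht0FS
  have hBigProp : ∀ G : Finset ℕ, (∀ i ∈ G, i < n) → G.Nonempty →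
      (∑ i ∈ G, ∑ t' ∈ g i, x t') + t0 ∈ Astar ∧
      (∏ i ∈ G, ∑ t' ∈ g i, x t') * t0 ∈ A := by
    intro G hGlt hGne
    have hGmem : G ∈ (Finset.range n).powerset :=
      Finset.mem_powerset.mpr fun i hi => Finset.mem_range.mpr (hGlt i hi)
    have := Set.mem_iInter₂.mp ht0Big G hGmem
    exact this hGne
  refine ⟨F, ?_, ?_, ?_, ?_⟩
  · intro i hi
    by_cases hin : i = n
    · subst hin; rw [Function.update_self]; exact hFne
    · rw [Function.update_of_ne hin]; exact hg1 i (by omega)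
  · intro i hi a ha b hb
    by_cases hin : i + 1 = n
    · rw [Function.update_of_ne (by omega : i ≠ n)] at ha
      rw [hin, Function.update_self] at hb
      have h1 : a ≤ (g i).sup id := Finset.le_sup (f := id) ha
      have h2 : (g i).sup id ≤ (Finset.range n).sup fun j => (g j).sup id :=
        Finset.le_sup (f := fun j => (g j).sup id) (Finset.mem_range.mpr (by omega : i < n))
      have h3 : m ≤ b := hFge b hb
      omega
    · by_cases hin2 : i + 1 < n
      · rw [Function.update_of_ne (by omega : i ≠ n)] at ha
        rw [Function.update_of_ne (by omega : i + 1 ≠ n)] at hb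
        exact hg2 i hin2 a ha b hb
      · omega
  · intro i hi
    by_cases hin : i = n
    · subst hin; rw [Function.update_self, ← hFsum]; omega
    · rw [Function.update_of_ne hin]; exact hg3 i (by omega)
  · intro G hGne hGlt
    by_cases hnG : n ∈ G
    · set G' := G.erase n with hG'
      have hG'lt : ∀ i ∈ G', i < n := by
        intro i hi
        obtain ⟨hne', hmem'⟩ := Finset.mem_erase.mp hi
        have := hGlt i hmem'
        omega
      have hfn : ∑ t ∈ Function.update g n F n, x t = t0 := by
        rw [Function.update_self, ← hFsum]
      have hrest : ∀ i ∈ G', ∑ t ∈ Function.update g n F i, x t = ∑ t ∈ g i, x t := by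
        intro i hi
        rw [Function.update_of_ne (Finset.mem_erase.mp hi).1]
      have hsum_split : ∑ i ∈ G, ∑ t ∈ Function.update g n F i, x t =
          (∑ i ∈ G', ∑ t ∈ g i, x t) + t0 := by
        rw [← Finset.sum_erase_add G _ hnG, hfn, Finset.sum_congr rfl hrest]
      have hprod_split : ∏ i ∈ G, ∑ t ∈ Function.update g n F i, x t =
          (∏ i ∈ G', ∑ t ∈ g i, x t) * t0 := by
        rw [← Finset.prod_erase_mul G _ hnG, hfn, Finset.prod_congr rfl hrest]
      by_cases hG'ne : G'.Nonempty
      · obtain ⟨hs, hp⟩ := hBigProp G' hG'lt hG'ne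
        rw [hsum_split, hprod_split]
        exact ⟨hs, hp⟩
      · have hG'empty : G' = ∅ := Finset.not_nonempty_iff_eq_empty.mp hG'ne
        rw [hsum_split, hprod_split, hG'empty]
        simp only [Finset.sum_empty, Finset.prod_empty, zero_add, one_mul]
        exact ⟨ht0star, hsub ht0star⟩
    · have hGlt' : ∀ i ∈ G, i < n := by
        intro i hi
        have := hGlt i hi
        have : i ≠ n := fun h => hnG (h ▸ hi)
        omega
      have hrw : ∀ i ∈ G, ∑ t ∈ Function.update g n F i, x t = ∑ t ∈ g i, x t := by
        intro i hi
        rw [Function.update_of_ne (by have := hGlt' i hi; omega : i ≠ n)]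
      rw [Finset.sum_congr rfl hrw, Finset.prod_congr rfl hrw]
      exact hg4 G hGne hGlt'


/-- If `x` is an almost minimal sequence and `A` is a C* set in `(ℕ,+)`, then there is
a sum subsystem `y` of `x` with `FS(y) ∪ FP(y) ⊆ A`. -/
theorem cStar_sum_subsystem (x : ℕ → ℕ) (hx : AlmostMinimal x) (A : Set ℕ)
    (hA : IsCStarSet A) :
    ∃ y : ℕ → ℕ, IsSumSubsystem y x ∧ FS y ∪ FP y ⊆ A := by
  classical
  obtain ⟨q, hq, hJq, hFSq⟩ := exists_q x hx
  have hAq : A ∈ q := hA q hq hJq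
  set Astar : Set ℕ := {s | s ∈ A ∧ {t | s + t ∈ A} ∈ q} with hAstar
  have hsub : Astar ⊆ A := fun s hs => hs.1
  have hstar_mem : Astar ∈ q := star_mem hq hAq
  have hstar : ∀ s ∈ Astar, {t | s + t ∈ Astar} ∈ q := fun s hs => star_step hq hs
  have hdiv : ∀ m : ℕ, 0 < m → {t | m * t ∈ A} ∈ q := fun m hm => div_mem' hA hq hJq hm
  have hne0 : {t : ℕ | t ≠ 0} ∈ q := by
    by_contra h
    have hc : {t : ℕ | t ≠ 0}ᶜ ∈ q := Ultrafilter.compl_mem_iff_notMem.mpr h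
    have hcompl : {t : ℕ | t ≠ 0}ᶜ = ({0} : Set ℕ) := by ext t; simp
    rw [hcompl] at hc
    exact not_isJSet_singleton_zero (hJq _ hc)
  have key : ∀ (n : ℕ) (g : ℕ → Finset ℕ), GoodFam x Astar A n g →
      ∃ H, GoodFam x Astar A (n + 1) (Function.update g n H) :=
    fun n g hGood => exists_ext x A Astar q hsub hstar_mem hstar hdiv hFSq hne0 hGood
  let T : ℕ → Type := fun n => {g : ℕ → Finset ℕ // GoodFam x Astar A n g}
  let step : ∀ n, T n → T (n + 1) := fun n gp =>
    ⟨Function.update gp.1 n (Classical.choose (key n gp.1 gp.2)),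
      Classical.choose_spec (key n gp.1 gp.2)⟩
  let fam : ∀ n, T n := fun n => Nat.rec ⟨fun _ => ∅, goodFam_zero x Astar A⟩ step n
  have fam_succ : ∀ n, (fam (n + 1)).1 =
      Function.update (fam n).1 n (Classical.choose (key n (fam n).1 (fam n).2)) :=
    fun n => rfl
  set H : ℕ → Finset ℕ := fun i => (fam (i + 1)).1 i with hHdef
  have agree : ∀ n, ∀ i, i < n → (fam n).1 i = H i := by
    intro n
    induction n with
    | zero => intro i hi; omega
    | succ n ih =>
      intro i hi
      by_cases hin : i = n
      · subst hin; rfl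
      · have h1 : (fam (n + 1)).1 i = (fam n).1 i := by
          rw [fam_succ n]
          exact Function.update_of_ne hin _ _
        rw [h1]
        exact ih i (by omega)
  set y : ℕ → ℕ := fun i => ∑ t ∈ H i, x t with hydef
  refine ⟨y, ⟨H, ?_, ?_, fun n => rfl⟩, ?_⟩
  · intro i
    have h := (fam (i + 1)).2.1 i (by omega)
    rwa [agree (i + 1) i (by omega)] at h
  · intro i a ha b hb
    have h2 : ∀ a ∈ (fam (i + 2)).1 i, ∀ b ∈ (fam (i + 2)).1 (i + 1), a < b :=
      (fam (i + 2)).2.2.1 i (by omega)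
    rw [agree (i + 2) i (by omega), agree (i + 2) (i + 1) (by omega)] at h2
    exact h2 a ha b hb
  · rintro s (⟨G, hGne, rfl⟩ | ⟨G, hGne, rfl⟩)
    · have hGlt : ∀ i ∈ G, i < G.sup id + 1 := fun i hi => by
        have := Finset.le_sup (f := id) hi
        simp only [id_eq] at this
        omega
      have h := ((fam (G.sup id + 1)).2.2.2.2 G hGne hGlt).1
      have hrw : ∀ i ∈ G, ∑ t ∈ (fam (G.sup id + 1)).1 i, x t = y i := fun i hi => by
        rw [agree (G.sup id + 1) i (hGlt i hi)]
      rw [Finset.sum_congr rfl hrw] at h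
      exact hsub h
    · have hGlt : ∀ i ∈ G, i < G.sup id + 1 := fun i hi => by
        have := Finset.le_sup (f := id) hi
        simp only [id_eq] at this
        omega
      have h := ((fam (G.sup id + 1)).2.2.2.2 G hGne hGlt).2
      have hrw : ∀ i ∈ G, ∑ t ∈ (fam (G.sup id + 1)).1 i, x t = y i := fun i hi => by
        rw [agree (G.sup id + 1) i (hGlt i hi)]
      rw [Finset.prod_congr rfl hrw] at h
      exact h
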